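/- arXiv:1606.00160 — 3 statements merged into one kernel-verified Lean document; each statement's English description precedes it below -/
import Mathlib

section
/- For all finitely supported functions u, v : ℕ → ℕ, one has u ≻ v in the lexicographic order if and only if R(u) > R(v). In other words, the rank R is a strictly order-preserving map from the lexicographically ordered finitely supported functions ℕ → ℕ into the rationals. -/
/-- The rank of a medal word `w : ℕ →₀ ℕ`. -/
noncomputable def medalRank (w : ℕ →₀ ℕ) : ℚ :=
  ∑ n ∈ w.support,
    (2 : ℚ) ^ (-(((∑ k ∈ Finset.range n, w k) + n : ℕ) : ℤ)) *
      (1 - (2 : ℚ) ^ (-(w n : ℤ)))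

/-- The lexicographic order on medal words: `u ≻ v` iff there is `n` with
`u k = v k` for all `k < n` and `u n > v n`. -/
def MedalLexGT (u v : ℕ →₀ ℕ) : Prop :=
  ∃ n : ℕ, (∀ k < n, u k = v k) ∧ v n < u n

/-!
Truncating a word after `M` letters, the rank satisfies the recursion
`R(w) = (1 - 2^{-w 0}) + 2^{-(w 0 + 1)} R(w 1, w 2, …)` and takes values in `[0, 1)`.
If `u 0 > v 0`, the first summand already separates the two words, since
`1 - 2^{-v 0} + 2^{-(v 0 + 1)} = 1 - 2^{-(v 0 + 1)} ≤ 1 - 2^{-u 0}`;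
if `u 0 = v 0`, the recursion reduces the comparison to the shifted words.
As the lexicographic order is linear, strict monotonicity gives the equivalence.
-/

open Finset

noncomputable def partialRank (f : ℕ → ℕ) (M : ℕ) : ℚ :=
  ∑ n ∈ range M, 2⁻¹ ^ (∑ k ∈ range n, f k + n) * (1 - 2⁻¹ ^ f n)

theorem medalRank_eq_partialRank (w : ℕ →₀ ℕ) {M : ℕ} (hM : w.support ⊆ range M) :
    medalRank w = partialRank w M := by
  rw [medalRank, partialRank]
  refine (sum_subset hM fun n _ hn ↦ ?_).trans (sum_congr rfl fun n _ ↦ ?_)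
  · simp [Finsupp.notMem_support_iff.mp hn]
  · simp only [zpow_neg, zpow_natCast, inv_pow]

@[simp]
theorem partialRank_zero (f : ℕ → ℕ) : partialRank f 0 = 0 := rfl

theorem partialRank_succ (f : ℕ → ℕ) (M : ℕ) :
    partialRank f (M + 1) =
      1 - 2⁻¹ ^ f 0 + 2⁻¹ ^ (f 0 + 1) * partialRank (fun n ↦ f (n + 1)) M := by
  rw [partialRank, sum_range_succ', partialRank, mul_sum, add_comm]
  congr 1
  · simp
  · refine sum_congr rfl fun n _ ↦ ?_
    rw [sum_range_succ', ← mul_assoc, ← pow_add]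
    ring_nf

theorem partialRank_nonneg (f : ℕ → ℕ) (M : ℕ) : 0 ≤ partialRank f M :=
  sum_nonneg fun _ _ ↦
    mul_nonneg (by positivity) (sub_nonneg.mpr (pow_le_one₀ (by norm_num) (by norm_num)))

theorem one_sub_le_partialRank_succ (f : ℕ → ℕ) (M : ℕ) :
    1 - 2⁻¹ ^ f 0 ≤ partialRank f (M + 1) := by
  rw [partialRank_succ]
  exact le_add_of_nonneg_right (mul_nonneg (by positivity) (partialRank_nonneg _ M))

theorem partialRank_succ_lt (f : ℕ → ℕ) (M : ℕ) :
    partialRank f (M + 1) < 1 - 2⁻¹ ^ (f 0 + 1) := by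
  have htail : partialRank (fun n ↦ f (n + 1)) M < 1 := by
    cases M with
    | zero => simp
    | succ M => exact (partialRank_succ_lt _ M).trans (sub_lt_self _ (by positivity))
  calc partialRank f (M + 1)
      < 1 - 2⁻¹ ^ f 0 + 2⁻¹ ^ (f 0 + 1) * 1 := by rw [partialRank_succ]; gcongr
    _ = 1 - 2⁻¹ ^ (f 0 + 1) := by ring

theorem partialRank_lt_of_lex {f g : ℕ → ℕ} {n M : ℕ} (hpre : ∀ k < n, g k = f k)
    (hlt : g n < f n) (hM : n < M) : partialRank g M < partialRank f M := by
  induction n generalizing f g M with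
  | zero =>
    obtain ⟨M, rfl⟩ := Nat.exists_eq_add_one_of_ne_zero hM.ne'
    calc partialRank g (M + 1)
        < 1 - 2⁻¹ ^ (g 0 + 1) := partialRank_succ_lt g M
      _ ≤ 1 - 2⁻¹ ^ f 0 :=
        sub_le_sub_left (pow_le_pow_of_le_one (by norm_num) (by norm_num) hlt) 1
      _ ≤ partialRank f (M + 1) := one_sub_le_partialRank_succ f M
  | succ n ih =>
    obtain ⟨M, rfl⟩ := Nat.exists_eq_add_one_of_ne_zero (Nat.zero_lt_of_lt hM).ne'
    rw [partialRank_succ, partialRank_succ, hpre 0 n.succ_pos]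
    gcongr
    exact ih (fun k hk ↦ hpre (k + 1) (by omega)) hlt (by omega)

theorem medalLexGT_iff_toLex_lt (u v : ℕ →₀ ℕ) : MedalLexGT u v ↔ toLex v < toLex u := by
  simp only [MedalLexGT, Finsupp.Lex.lt_iff, eq_comm]
  rfl

theorem strictMono_medalRank_ofLex :
    StrictMono fun w : Lex (ℕ →₀ ℕ) ↦ medalRank (ofLex w) := by
  intro v u hvu
  dsimp only
  obtain ⟨n, hpre, hlt⟩ := Finsupp.Lex.lt_iff.mp hvu
  obtain ⟨M, hM⟩ := exists_nat_subset_range (insert n ((ofLex u).support ∪ (ofLex v).support))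
  rw [insert_subset_iff, union_subset_iff, mem_range] at hM
  rw [medalRank_eq_partialRank _ hM.2.1, medalRank_eq_partialRank _ hM.2.2]
  exact partialRank_lt_of_lex hpre hlt hM.1

theorem medalRank_strictMono (u v : ℕ →₀ ℕ) :
    MedalLexGT u v ↔ medalRank v < medalRank u :=
  (medalLexGT_iff_toLex_lt u v).trans strictMono_medalRank_ofLex.lt_iff_lt.symm
end

section
/- The rank map R is injective on finitely supported functions ℕ → ℕ: if R(u) = R(v) then u = v. That is, a medal distribution is uniquely determined by its numerical rank. -/
open Finset

namespace MedalRank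

def partialRank (w : ℕ → ℕ) (N : ℕ) : ℚ :=
  ∑ n ∈ range N, (2⁻¹ : ℚ) ^ (∑ k ∈ range n, w k + n) * (1 - 2⁻¹ ^ w n)

lemma two_zpow_neg_natCast (m : ℕ) : (2 : ℚ) ^ (-(m : ℤ)) = 2⁻¹ ^ m := by
  rw [zpow_neg, zpow_natCast, inv_pow]

lemma medalRank_eq_partialRank {w : ℕ →₀ ℕ} {N : ℕ} (h : w.support ⊆ range N) :
    medalRank w = partialRank w N := by
  simp only [medalRank, partialRank, two_zpow_neg_natCast]
  refine sum_subset h fun n _ hn => ?_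
  simp [Finsupp.notMem_support_iff.mp hn]

lemma partialRank_succ (w : ℕ → ℕ) (N : ℕ) :
    partialRank w (N + 1) =
      (1 - 2⁻¹ ^ w 0) + 2⁻¹ ^ (w 0 + 1) * partialRank (fun k => w (k + 1)) N := by
  simp only [partialRank, sum_range_succ' _ N, mul_sum]
  rw [add_comm]
  congr 1
  · simp only [range_zero, sum_empty, zero_add, pow_zero, one_mul]
  · refine sum_congr rfl fun n _ => ?_
    rw [sum_range_succ']
    ring

lemma one_sub_add_mul_mem_Ico {x : ℚ} (hx : x ∈ Set.Ico 0 1) (a : ℕ) :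
    (1 - 2⁻¹ ^ a) + 2⁻¹ ^ (a + 1) * x ∈ Set.Ico (1 - (2⁻¹ : ℚ) ^ a) (1 - 2⁻¹ ^ (a + 1)) := by
  have hpos : (0 : ℚ) < 2⁻¹ ^ (a + 1) := by positivity
  have hhalf : (2⁻¹ : ℚ) ^ a = 2 * 2⁻¹ ^ (a + 1) := by rw [pow_succ]; ring
  constructor
  · nlinarith [hx.1]
  · nlinarith [hx.2]

lemma eq_of_mem_Ico_one_sub_inv_two_pow {a b : ℕ} {r : ℚ}
    (ha : r ∈ Set.Ico (1 - (2⁻¹ : ℚ) ^ a) (1 - 2⁻¹ ^ (a + 1)))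
    (hb : r ∈ Set.Ico (1 - (2⁻¹ : ℚ) ^ b) (1 - 2⁻¹ ^ (b + 1))) : a = b := by
  have key : ∀ {a b : ℕ}, a < b → r ∈ Set.Ico (1 - (2⁻¹ : ℚ) ^ a) (1 - 2⁻¹ ^ (a + 1)) →
      r ∉ Set.Ico (1 - (2⁻¹ : ℚ) ^ b) (1 - 2⁻¹ ^ (b + 1)) := by
    intro a b hab ha hb
    have : (2⁻¹ : ℚ) ^ b ≤ 2⁻¹ ^ (a + 1) := pow_le_pow_of_le_one (by norm_num) (by norm_num) hab
    linarith [ha.2, hb.1]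
  rcases lt_trichotomy a b with hab | hab | hab
  exacts [absurd hb (key hab ha), hab, absurd ha (key hab hb)]

lemma partialRank_mem_Ico (w : ℕ → ℕ) (N : ℕ) : partialRank w N ∈ Set.Ico 0 1 := by
  induction N generalizing w with
  | zero => simp [partialRank]
  | succ N ih =>
    rw [partialRank_succ]
    refine Set.Ico_subset_Ico ?_ ?_ (one_sub_add_mul_mem_Ico (ih _) (w 0))
    · simpa using pow_le_one₀ (n := w 0) (by norm_num : (0 : ℚ) ≤ 2⁻¹) (by norm_num)
    · simp only [sub_le_self_iff]
      positivity

lemma eq_of_partialRank_eq {u v : ℕ → ℕ} {N : ℕ} (h : partialRank u N = partialRank v N) :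
    ∀ n < N, u n = v n := by
  induction N generalizing u v with
  | zero => simp
  | succ N ih =>
    rw [partialRank_succ, partialRank_succ] at h
    have head : u 0 = v 0 := eq_of_mem_Ico_one_sub_inv_two_pow
      (h ▸ one_sub_add_mul_mem_Ico (partialRank_mem_Ico _ N) (u 0))
      (one_sub_add_mul_mem_Ico (partialRank_mem_Ico _ N) (v 0))
    rw [head] at h
    have tail := ih (mul_left_cancel₀ (by positivity) (add_left_cancel h))
    rintro (_ | n) hn
    exacts [head, tail n (by omega)]

end MedalRank

theorem medalRank_injective : Function.Injective medalRank := by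
  intro u v h
  obtain ⟨N, hN⟩ := exists_nat_subset_range (u.support ∪ v.support)
  have hu : u.support ⊆ range N := subset_union_left.trans hN
  have hv : v.support ⊆ range N := subset_union_right.trans hN
  rw [MedalRank.medalRank_eq_partialRank hu, MedalRank.medalRank_eq_partialRank hv] at h
  ext n
  by_cases hn : n < N
  · exact MedalRank.eq_of_partialRank_eq h n hn
  · have outside {w : ℕ →₀ ℕ} (hw : w.support ⊆ range N) : w n = 0 :=
      Finsupp.notMem_support_iff.mp fun hn' => hn (mem_range.mp (hw hn'))
    rw [outside hu, outside hv]
end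

section
/- Let w : ℕ → ℕ be finitely supported with w m = 0 for all m ≥ n, and let S = Σ_m w m. For every k : ℕ, if w' and w'' denote w modified to take the value k+1, respectively k, at position n, then R(w') − R(w'') = 2^{-(S + n + k + 1)}. In particular this increment is strictly decreasing in k: each additional medal of a given class raises the rank by less than the previous one. -/
/-!
Changing the last class `n` of a medal word only changes the summand of `medalRank` at `n`:
earlier summands do not see `w n`, and there are no later ones. With `P = ∑_{i<n} w i`, that
summand is `2^{-(P+n)} (1 - 2^{-w n})`, so raising `w n` from `k` to `k + 1` adds
`2^{-(P+n)} (2^{-k} - 2^{-(k+1)}) = 2^{-(P+n+k+1)}`.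
-/

open Finset

noncomputable def medalTerm (w : ℕ →₀ ℕ) (m : ℕ) : ℚ :=
  (2 : ℚ) ^ (-(((∑ i ∈ range m, w i) + m : ℕ) : ℤ)) * (1 - (2 : ℚ) ^ (-(w m : ℤ)))

lemma medalTerm_of_eq_zero {w : ℕ →₀ ℕ} {m : ℕ} (h : w m = 0) : medalTerm w m = 0 := by
  simp [medalTerm, h]

lemma support_subset_range {w : ℕ →₀ ℕ} {N : ℕ} (hN : ∀ m, N ≤ m → w m = 0) :
    w.support ⊆ range N := fun m hm => by
  by_contra h
  exact Finsupp.mem_support_iff.mp hm (hN m (by simpa using h))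

lemma medalRank_eq_sum_range (w : ℕ →₀ ℕ) {N : ℕ} (hN : ∀ m, N ≤ m → w m = 0) :
    medalRank w = ∑ m ∈ range N, medalTerm w m :=
  sum_subset (support_subset_range hN) fun _ _ hm => medalTerm_of_eq_zero (by simpa using hm)

lemma sum_range_update_of_le (w : ℕ →₀ ℕ) {n m : ℕ} (hmn : m ≤ n) (v : ℕ) :
    ∑ i ∈ range m, w.update n v i = ∑ i ∈ range m, w i :=
  sum_congr rfl fun i hi => by
    rw [Finsupp.update_apply, if_neg (by simp at hi; omega)]

lemma medalTerm_update_of_lt (w : ℕ →₀ ℕ) {n m : ℕ} (hmn : m < n) (v : ℕ) :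
    medalTerm (w.update n v) m = medalTerm w m := by
  rw [medalTerm, medalTerm, sum_range_update_of_le w hmn.le, Finsupp.update_apply, if_neg hmn.ne]

lemma medalTerm_update_self (w : ℕ →₀ ℕ) (n v : ℕ) :
    medalTerm (w.update n v) n =
      (2 : ℚ) ^ (-(((∑ i ∈ range n, w i) + n : ℕ) : ℤ)) * (1 - (2 : ℚ) ^ (-(v : ℤ))) := by
  rw [medalTerm, sum_range_update_of_le w le_rfl, Finsupp.update_apply, if_pos rfl]

lemma medalRank_update (w : ℕ →₀ ℕ) {n : ℕ} (hw : ∀ m, n < m → w m = 0) (v : ℕ) :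
    medalRank (w.update n v) = ∑ m ∈ range n, medalTerm w m +
      (2 : ℚ) ^ (-(((∑ i ∈ range n, w i) + n : ℕ) : ℤ)) * (1 - (2 : ℚ) ^ (-(v : ℤ))) := by
  have hvanish : ∀ m, n + 1 ≤ m → w.update n v m = 0 := fun m hm => by
    rw [Finsupp.update_apply, if_neg (by omega), hw m (by omega)]
  rw [medalRank_eq_sum_range _ hvanish, sum_range_succ, medalTerm_update_self]
  congr 1
  exact sum_congr rfl fun m hm => medalTerm_update_of_lt w (mem_range.mp hm) v

lemma zpow_neg_two_mul_sub (a k : ℕ) :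
    (2 : ℚ) ^ (-(a : ℤ)) * ((1 - (2 : ℚ) ^ (-((k + 1 : ℕ) : ℤ))) - (1 - (2 : ℚ) ^ (-(k : ℤ)))) =
      (2 : ℚ) ^ (-((a + k + 1 : ℕ) : ℤ)) := by
  simp only [zpow_neg, zpow_natCast, pow_succ, pow_add]
  field_simp
  ring

theorem medalRank_update_succ_sub (w : ℕ →₀ ℕ) {n : ℕ} (hw : ∀ m, n < m → w m = 0) (k : ℕ) :
    medalRank (w.update n (k + 1)) - medalRank (w.update n k) =
      (2 : ℚ) ^ (-(((∑ i ∈ range n, w i) + n + k + 1 : ℕ) : ℤ)) := by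
  rw [medalRank_update w hw, medalRank_update w hw, add_sub_add_left_eq_sub, ← mul_sub,
    zpow_neg_two_mul_sub]

theorem medalRank_increment (w : ℕ →₀ ℕ) (n : ℕ)
    (hw : ∀ m, n ≤ m → w m = 0)
    (S : ℕ) (hS : S = ∑ m ∈ w.support, w m) (k : ℕ) :
    medalRank (w.update n (k + 1)) - medalRank (w.update n k) =
      (2 : ℚ) ^ (-((S + n + k + 1 : ℕ) : ℤ)) := by
  have hprefix : ∑ i ∈ range n, w i = S := by
    rw [hS]
    exact (sum_subset (support_subset_range hw) fun _ _ hm => by simpa using hm).symm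
  rw [medalRank_update_succ_sub w (fun m hm => hw m hm.le), hprefix]
end
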